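/- arXiv:1705.01535 — 2 statements merged into one kernel-verified Lean document; each statement's English description precedes it below -/
import Mathlib

section
/- (Lemma 1.) Let (f, ≺) be a flow on an open graph (G, I, O) with |I| = |O| = n, let < be a measurement order, and let w ∈ O^C. Then for every input i ∈ I, the flow path P_i contains exactly one member of Q_w, i.e., |P_i ∩ Q_w| = 1. -/
/-- One step of iterating the flow function: allowed only from a non-output vertex. -/
def flowStep {V : Type*} (O : Set V) (f : V → V) : V → V → Prop :=
  fun u v => u ∉ O ∧ f u = v

/-- The flow path of a vertex `i`: the set {i, f(i), f(f(i)), …} obtained by iterating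
`f` from `i` for as long as the current vertex lies in O^C. -/
def flowPath {V : Type*} (O : Set V) (f : V → V) (i : V) : Set V :=
  {v | Relation.ReflTransGen (flowStep O f) i v}

/-- M_w: the qubits measured strictly before w. -/
def measuredSet {V : Type*} (O : Set V) (lt : V → V → Prop) (w : V) : Set V :=
  {v | v ∉ O ∧ lt v w}

/-- U_w: the unmeasured qubits other than w, i.e. V \ (M_w ∪ {w}). -/
def unmeasuredSet {V : Type*} (O : Set V) (lt : V → V → Prop) (w : V) : Set V :=
  (measuredSet O lt w ∪ {w})ᶜ

/-- Q_w = N_w ∪ I_w ∪ O_w, where N_w = N(w) ∩ U_w, I_w = I ∩ U_w and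
O_w = {v ∈ U_w : N(v) ∩ M_w ≠ ∅}. -/
def requiredSet {V : Type*} (G : SimpleGraph V) (I O : Set V)
    (lt : V → V → Prop) (w : V) : Set V :=
  (G.neighborSet w ∩ unmeasuredSet O lt w) ∪ (I ∩ unmeasuredSet O lt w) ∪
    {v ∈ unmeasuredSet O lt w | (G.neighborSet v ∩ measuredSet O lt w).Nonempty}


/-!
Along the flow path `i = u₀, u₁, …, u_N` (with `u_N` the first output) consecutive non-output
vertices increase in the measurement order, by (F1). Hence once the path enters `U_w` it stays
there, and it does enter since outputs are never measured. The entry vertex `u_s` lies in `Q_w`: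
either it is the input `i`, or by (F3) it is adjacent to its predecessor, which is `w` or lies
in `M_w`. No later vertex `f v` (with `v ∈ U_w`) lies in `Q_w`: it is not an input, and by (F2)
every neighbour of `f v` other than `v` succeeds `v`, so is measured after `w`.
-/

section FlowPath

variable {V : Type*} {O : Set V} {f : V → V}

lemma mem_flowPath_iff {i v : V} :
    v ∈ flowPath O f i ↔ ∃ m, (∀ j < m, f^[j] i ∉ O) ∧ f^[m] i = v := by
  constructor
  · intro hv
    induction hv with
    | refl => exact ⟨0, by simp, rfl⟩
    | tail _ hstep ih =>
      obtain ⟨m, hm, rfl⟩ := ih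
      obtain ⟨hmO, rfl⟩ := hstep
      refine ⟨m + 1, fun j hj => ?_, Function.iterate_succ_apply' f m i⟩
      rcases Nat.lt_succ_iff_lt_or_eq.mp hj with hj | rfl
      exacts [hm j hj, hmO]
  · rintro ⟨m, hm, rfl⟩
    induction m with
    | zero => exact Relation.ReflTransGen.refl
    | succ m ih =>
      exact (ih fun j hj => hm j (by omega)).tail
        ⟨hm m m.lt_succ_self, (Function.iterate_succ_apply' f m i).symm⟩

lemma flowPath_eq_image_Iic {i : V} {N : ℕ} (hN : f^[N] i ∈ O)
    (hbefore : ∀ j < N, f^[j] i ∉ O) :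
    flowPath O f i = (fun m => f^[m] i) '' Set.Iic N := by
  ext v
  rw [mem_flowPath_iff]
  constructor
  · rintro ⟨m, hm, rfl⟩
    exact ⟨m, not_lt.mp fun hNm => hm N hNm hN, rfl⟩
  · rintro ⟨m, hmN, rfl⟩
    exact ⟨m, fun j hj => hbefore j (lt_of_lt_of_le hj hmN), rfl⟩

lemma exists_first_iterate_mem [Finite V] {r : V → V → Prop} (hirr : ∀ v, ¬ r v v)
    (htrans : ∀ a b c, r a b → r b c → r a c) (hstep : ∀ v, v ∉ O → r v (f v)) (i : V) :
    ∃ N, f^[N] i ∈ O ∧ ∀ j < N, f^[j] i ∉ O := by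
  classical
  have hex : ∃ N, f^[N] i ∈ O := by
    by_contra! hnever
    have : IsTrans V r := ⟨htrans⟩
    have hrel : ∀ a b, a < b → r (f^[a] i) (f^[b] i) :=
      Nat.rel_of_forall_rel_succ_of_lt r fun n => by
        rw [Function.iterate_succ_apply']
        exact hstep _ (hnever n)
    refine not_injective_infinite_finite (fun n => f^[n] i)
      (Function.Injective.of_lt_imp_ne fun a b hab heq => hirr (f^[b] i) ?_)
    simpa only [heq] using hrel a b hab
  exact ⟨Nat.find hex, Nat.find_spec hex, fun j hj => Nat.find_min hex hj⟩

end FlowPath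

lemma exists_image_Iic_inter_eq_singleton {α : Type*} {g : ℕ → α} {U Q : Set α} {N : ℕ}
    (hQU : Q ⊆ U) (hN : g N ∈ U) (hU_succ : ∀ m < N, g m ∈ U → g (m + 1) ∈ U)
    (h0 : g 0 ∈ U → g 0 ∈ Q) (henter : ∀ m < N, g m ∉ U → g (m + 1) ∈ U → g (m + 1) ∈ Q)
    (hstay : ∀ m < N, g m ∈ U → g (m + 1) ∉ Q) :
    ∃ s, g '' Set.Iic N ∩ Q = {g s} := by
  classical
  have hex : ∃ m, g m ∈ U := ⟨N, hN⟩
  set s := Nat.find hex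
  have hsU : g s ∈ U := Nat.find_spec hex
  have hsN : s ≤ N := Nat.find_min' hex hN
  have hafter : ∀ m, s ≤ m → m ≤ N → g m ∈ U := by
    intro m hsm hmN
    induction m, hsm using Nat.le_induction with
    | base => exact hsU
    | succ m _ ih => exact hU_succ m (by omega) (ih (by omega))
  have hsQ : g s ∈ Q := by
    rcases Nat.eq_zero_or_pos s with hs0 | hspos
    · rw [hs0] at hsU ⊢
      exact h0 hsU
    · obtain ⟨k, hk⟩ : ∃ k, s = k + 1 := ⟨s - 1, by omega⟩
      have hkU : g k ∉ U := Nat.find_min hex (by omega : k < s)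
      rw [hk] at hsU ⊢
      exact henter k (by omega) hkU hsU
  have honly : ∀ m ≤ N, g m ∈ Q → m = s := by
    intro m hmN hm
    have hsm : s ≤ m := Nat.find_min' hex (hQU hm)
    by_contra hne
    obtain ⟨k, rfl⟩ : ∃ k, m = k + 1 := ⟨m - 1, by omega⟩
    exact hstay k (by omega) (hafter k (by omega) (by omega)) hm
  refine ⟨s, Set.eq_singleton_iff_unique_mem.mpr ⟨⟨⟨s, hsN, rfl⟩, hsQ⟩, ?_⟩⟩
  rintro _ ⟨⟨m, hmN, rfl⟩, hm⟩
  rw [honly m hmN hm]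

section MeasurementOrder

variable {V : Type*} {O : Set V} {lt : V → V → Prop} {w : V}

lemma mem_unmeasuredSet_iff {v : V} :
    v ∈ unmeasuredSet O lt w ↔ (v ∈ O ∨ ¬ lt v w) ∧ v ≠ w := by
  simp only [unmeasuredSet, measuredSet, Set.mem_compl_iff, Set.mem_union, Set.mem_ofPred_eq,
    Set.mem_singleton_iff]
  tauto

lemma mem_unmeasuredSet_of_mem (hw : w ∉ O) {v : V} (hv : v ∈ O) :
    v ∈ unmeasuredSet O lt w :=
  mem_unmeasuredSet_iff.mpr ⟨Or.inl hv, fun h => hw (h ▸ hv)⟩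

lemma requiredSet_subset_unmeasuredSet (G : SimpleGraph V) (I : Set V) :
    requiredSet G I O lt w ⊆ unmeasuredSet O lt w := by
  rintro v ((hv | hv) | hv)
  exacts [hv.2, hv.2, hv.1]

lemma mem_unmeasuredSet_of_lt (hlt_irr : ∀ v, v ∉ O → ¬ lt v v)
    (hlt_trans : ∀ a b c, a ∉ O → b ∉ O → c ∉ O → lt a b → lt b c → lt a c)
    (hlt_total : ∀ u v, u ∉ O → v ∉ O → u ≠ v → lt u v ∨ lt v u) (hw : w ∉ O) {a b : V}
    (haO : a ∉ O) (hbO : b ∉ O) (ha : a ∈ unmeasuredSet O lt w) (hab : lt a b) :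
    b ∈ unmeasuredSet O lt w := by
  obtain ⟨ha_not_lt, haw⟩ := mem_unmeasuredSet_iff.mp ha
  have hwa : lt w a :=
    (hlt_total w a hw haO (Ne.symm haw)).resolve_right (ha_not_lt.resolve_left haO)
  have hwb : lt w b := hlt_trans w a b hw haO hbO hwa hab
  refine mem_unmeasuredSet_iff.mpr ⟨Or.inr fun hbw => ?_, fun hbw => ?_⟩
  · exact hlt_irr w hw (hlt_trans w b w hw hbO hw hwb hbw)
  · exact hlt_irr w hw (hbw ▸ hwb)

variable {f : V → V} {prec : V → V → Prop}

lemma apply_mem_unmeasuredSet (hF1 : ∀ i, i ∉ O → prec i (f i))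
    (hlt_irr : ∀ v, v ∉ O → ¬ lt v v)
    (hlt_trans : ∀ a b c, a ∉ O → b ∉ O → c ∉ O → lt a b → lt b c → lt a c)
    (hlt_total : ∀ u v, u ∉ O → v ∉ O → u ≠ v → lt u v ∨ lt v u)
    (hlt_ext : ∀ u v, u ∉ O → v ∉ O → prec u v → lt u v) (hw : w ∉ O) {v : V} (hvO : v ∉ O)
    (hv : v ∈ unmeasuredSet O lt w) : f v ∈ unmeasuredSet O lt w := by
  by_cases hfvO : f v ∈ O
  · exact mem_unmeasuredSet_of_mem hw hfvO
  · exact mem_unmeasuredSet_of_lt hlt_irr hlt_trans hlt_total hw hvO hfvO hv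
      (hlt_ext v (f v) hvO hfvO (hF1 v hvO))

variable (G : SimpleGraph V) (I : Set V)

lemma apply_mem_requiredSet (hF3 : ∀ i, i ∉ O → G.Adj i (f i)) {v : V} (hvO : v ∉ O)
    (hv : v ∉ unmeasuredSet O lt w) (hfv : f v ∈ unmeasuredSet O lt w) :
    f v ∈ requiredSet G I O lt w := by
  rw [mem_unmeasuredSet_iff] at hv
  by_cases hvw : v = w
  · subst hvw
    exact Or.inl (Or.inl ⟨hF3 v hvO, hfv⟩)
  · exact Or.inr ⟨hfv, v, (hF3 v hvO).symm, hvO, by tauto⟩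

lemma apply_not_mem_requiredSet (hmap : ∀ v, v ∉ O → f v ∉ I)
    (hF2 : ∀ i, i ∉ O → ∀ j, G.Adj (f i) j → j = i ∨ prec i j)
    (hlt_trans : ∀ a b c, a ∉ O → b ∉ O → c ∉ O → lt a b → lt b c → lt a c)
    (hlt_ext : ∀ u v, u ∉ O → v ∉ O → prec u v → lt u v) (hw : w ∉ O) {v : V} (hvO : v ∉ O)
    (hv : v ∈ unmeasuredSet O lt w) : f v ∉ requiredSet G I O lt w := by
  obtain ⟨hv_not_lt, hvw⟩ := mem_unmeasuredSet_iff.mp hv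
  replace hv_not_lt : ¬ lt v w := hv_not_lt.resolve_left hvO
  rintro ((⟨hadj, -⟩ | ⟨hfvI, -⟩) | ⟨-, x, hadj, hxO, hxw⟩)
  · rcases hF2 v hvO w hadj.symm with rfl | hprec
    exacts [hvw rfl, hv_not_lt (hlt_ext v w hvO hw hprec)]
  · exact hmap v hvO hfvI
  · rcases hF2 v hvO x hadj with rfl | hprec
    exacts [hv_not_lt hxw, hv_not_lt (hlt_trans v x w hvO hxO hw (hlt_ext v x hvO hxO hprec) hxw)]

end MeasurementOrder

theorem flow_path_meets_required_set_exactly_once_general {V : Type*} [Fintype V]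
    (G : SimpleGraph V) (I O : Set V)
    (f : V → V) (prec : V → V → Prop)
    (hmap : ∀ v, v ∉ O → f v ∉ I)
    (hirr : ∀ v, ¬ prec v v)
    (htrans : ∀ a b c, prec a b → prec b c → prec a c)
    (hF1 : ∀ i, i ∉ O → prec i (f i))
    (hF2 : ∀ i, i ∉ O → ∀ j, G.Adj (f i) j → j = i ∨ prec i j)
    (hF3 : ∀ i, i ∉ O → G.Adj i (f i))
    (lt : V → V → Prop)
    (hlt_irr : ∀ v, v ∉ O → ¬ lt v v)
    (hlt_trans : ∀ a b c, a ∉ O → b ∉ O → c ∉ O → lt a b → lt b c → lt a c)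
    (hlt_total : ∀ u v, u ∉ O → v ∉ O → u ≠ v → lt u v ∨ lt v u)
    (hlt_ext : ∀ u v, u ∉ O → v ∉ O → prec u v → lt u v)
    (w : V) (hw : w ∉ O) :
    ∀ i ∈ I, (flowPath O f i ∩ requiredSet G I O lt w).ncard = 1 := by
  intro i hi
  obtain ⟨N, hN, hbefore⟩ := exists_first_iterate_mem hirr htrans hF1 i
  have hsucc (m : ℕ) : f^[m + 1] i = f (f^[m] i) := Function.iterate_succ_apply' f m i
  obtain ⟨s, hs⟩ := exists_image_Iic_inter_eq_singleton (g := fun m => f^[m] i)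
    (requiredSet_subset_unmeasuredSet G I) (mem_unmeasuredSet_of_mem hw hN)
    (fun m hm hmU => hsucc m ▸
      apply_mem_unmeasuredSet hF1 hlt_irr hlt_trans hlt_total hlt_ext hw (hbefore m hm) hmU)
    (fun hiU => Or.inl (Or.inr ⟨hi, hiU⟩))
    (fun m hm hmU hfmU => hsucc m ▸
      apply_mem_requiredSet G I hF3 (hbefore m hm) hmU (hsucc m ▸ hfmU))
    (fun m hm hmU => hsucc m ▸
      apply_not_mem_requiredSet G I hmap hF2 hlt_trans hlt_ext hw (hbefore m hm) hmU)
  rw [flowPath_eq_image_Iic hN hbefore, hs, Set.ncard_singleton]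

/-- Lemma 1: Let (f, ≺) be a flow on an open graph (G, I, O) with
|I| = |O| = n, let < be a measurement order, and let w ∈ O^C. Then for every input
i ∈ I, the flow path P_i contains exactly one member of Q_w, i.e. |P_i ∩ Q_w| = 1. -/
theorem flow_path_meets_required_set_exactly_once {V : Type*} [Fintype V]
    (G : SimpleGraph V) (I O : Set V) (n : ℕ)
    (hI : I.ncard = n) (hO : O.ncard = n)
    (f : V → V) (prec : V → V → Prop)
    (hmap : ∀ v, v ∉ O → f v ∉ I)
    (hirr : ∀ v, ¬ prec v v)
    (htrans : ∀ a b c, prec a b → prec b c → prec a c)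
    (hF1 : ∀ i, i ∉ O → prec i (f i))
    (hF2 : ∀ i, i ∉ O → ∀ j, G.Adj (f i) j → j = i ∨ prec i j)
    (hF3 : ∀ i, i ∉ O → G.Adj i (f i))
    (lt : V → V → Prop)
    (hlt_irr : ∀ v, v ∉ O → ¬ lt v v)
    (hlt_trans : ∀ a b c, a ∉ O → b ∉ O → c ∉ O → lt a b → lt b c → lt a c)
    (hlt_total : ∀ u v, u ∉ O → v ∉ O → u ≠ v → lt u v ∨ lt v u)
    (hlt_ext : ∀ u v, u ∉ O → v ∉ O → prec u v → lt u v)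
    (w : V) (hw : w ∉ O) :
    ∀ i ∈ I, (flowPath O f i ∩ requiredSet G I O lt w).ncard = 1 :=
  flow_path_meets_required_set_exactly_once_general G I O f prec hmap hirr htrans hF1 hF2 hF3 lt
    hlt_irr hlt_trans hlt_total hlt_ext w hw
end

section
/- (Theorem 1, combinatorial form.) Let (f, ≺) be a flow on an open graph (G, I, O) with |I| = |O| = n, I ≠ O, and |V| = m. Then for every measurement order < and every w ∈ O^C, the set of qubits that must simultaneously exist when w is measured satisfies |Q_w ∪ {w}| = n + 1 = min(n + 1, m). -/
theorem Set.ncard_union_image_diff {α : Type*} [Finite α] {f : α → α} {s t : Set α}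
    (hdisj : Disjoint s (f '' t)) (hinj : Set.InjOn f t) (hsub : t ⊆ s ∪ f '' t) :
    ((s ∪ f '' t) \ t).ncard = s.ncard := by
  have hcard : (s ∪ f '' t).ncard = s.ncard + t.ncard := by
    rw [Set.ncard_union_eq hdisj, hinj.ncard_image]
  rw [Set.ncard_sdiff hsub, hcard, Nat.add_sub_cancel]

theorem Set.image_compl_eq_compl_of_injOn {α : Type*} [Finite α] {f : α → α} {I O : Set α}
    (hcard : I.ncard = O.ncard) (hmap : ∀ v, v ∉ O → f v ∉ I) (hinj : Set.InjOn f Oᶜ) :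
    f '' Oᶜ = Iᶜ := by
  have hcompl : Iᶜ.ncard = Oᶜ.ncard := by
    have hI := Set.ncard_add_ncard_compl I
    have hO := Set.ncard_add_ncard_compl O
    omega
  refine Set.eq_of_subset_of_ncard_le ?_ ?_
  · rintro _ ⟨x, hx, rfl⟩
    exact hmap x hx
  · rw [hinj.ncard_image, hcompl]

section Flow

variable {V : Type*} {G : SimpleGraph V} {I O : Set V} {f : V → V} {prec lt : V → V → Prop}

theorem injOn_compl_of_flow (hirr : ∀ v, ¬ prec v v)
    (htrans : ∀ a b c, prec a b → prec b c → prec a c)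
    (hF2 : ∀ i, i ∉ O → ∀ j, G.Adj (f i) j → j = i ∨ prec i j)
    (hF3 : ∀ i, i ∉ O → G.Adj i (f i)) :
    Set.InjOn f Oᶜ := by
  intro a ha b hb hab
  by_contra hne
  have hba : G.Adj (f b) a := hab ▸ (hF3 a ha).symm
  have hab' : G.Adj (f a) b := hab ▸ (hF3 b hb).symm
  rcases hF2 b hb a hba with rfl | hprec_ba
  · exact hne rfl
  rcases hF2 a ha b hab' with rfl | hprec_ab
  · exact hne rfl
  exact hirr a (htrans a b a hprec_ab hprec_ba)

theorem mem_measuredSet_of_prec {w x y : V}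
    (hlt_trans : ∀ a b c, a ∉ O → b ∉ O → c ∉ O → lt a b → lt b c → lt a c)
    (hlt_ext : ∀ u v, u ∉ O → v ∉ O → prec u v → lt u v)
    (hw : w ∉ O) (hx : x ∉ O) (hxy : prec x y) (hy : y ∈ measuredSet O lt w ∪ {w}) :
    x ∈ measuredSet O lt w := by
  rcases hy with ⟨hyO, hyw⟩ | rfl
  · exact ⟨hx, hlt_trans x y w hx hyO hw (hlt_ext x y hx hyO hxy) hyw⟩
  · exact ⟨hx, hlt_ext x y hx hw hxy⟩

theorem measuredSet_union_singleton_subset {w : V} (himg : f '' Oᶜ = Iᶜ)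
    (hF1 : ∀ i, i ∉ O → prec i (f i))
    (hlt_trans : ∀ a b c, a ∉ O → b ∉ O → c ∉ O → lt a b → lt b c → lt a c)
    (hlt_ext : ∀ u v, u ∉ O → v ∉ O → prec u v → lt u v) (hw : w ∉ O) :
    measuredSet O lt w ∪ {w} ⊆ I ∪ f '' (measuredSet O lt w ∪ {w}) := by
  intro v hv
  by_cases hvI : v ∈ I
  · exact Or.inl hvI
  obtain ⟨x, hx, rfl⟩ : v ∈ f '' Oᶜ := himg ▸ hvI
  exact Or.inr ⟨x, Or.inl (mem_measuredSet_of_prec hlt_trans hlt_ext hw hx (hF1 x hx) hv), rfl⟩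

theorem requiredSet_eq {w : V} (himg : f '' Oᶜ = Iᶜ)
    (hF2 : ∀ i, i ∉ O → ∀ j, G.Adj (f i) j → j = i ∨ prec i j)
    (hF3 : ∀ i, i ∉ O → G.Adj i (f i))
    (hlt_trans : ∀ a b c, a ∉ O → b ∉ O → c ∉ O → lt a b → lt b c → lt a c)
    (hlt_ext : ∀ u v, u ∉ O → v ∉ O → prec u v → lt u v) (hw : w ∉ O) :
    requiredSet G I O lt w =
      (I ∪ f '' (measuredSet O lt w ∪ {w})) \ (measuredSet O lt w ∪ {w}) := by
  ext v
  constructor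
  · intro hv
    have hvU : v ∈ unmeasuredSet O lt w := by
      rcases hv with (⟨-, h⟩ | ⟨-, h⟩) | ⟨h, -⟩ <;> exact h
    refine ⟨?_, hvU⟩
    by_cases hvI : v ∈ I
    · exact Or.inl hvI
    obtain ⟨x, hx, rfl⟩ : v ∈ f '' Oᶜ := himg ▸ hvI
    refine Or.inr ⟨x, ?_, rfl⟩
    rcases hv with (⟨hadj, -⟩ | ⟨hvI', -⟩) | ⟨-, u, hu, huM⟩
    · rcases hF2 x hx w (G.adj_symm hadj) with rfl | hprec
      · exact Or.inr rfl
      · exact Or.inl (mem_measuredSet_of_prec hlt_trans hlt_ext hw hx hprec (Or.inr rfl))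
    · exact absurd hvI' hvI
    · rcases hF2 x hx u hu with rfl | hprec
      · exact Or.inl huM
      · exact Or.inl (mem_measuredSet_of_prec hlt_trans hlt_ext hw hx hprec (Or.inl huM))
  · rintro ⟨hvI | ⟨x, hxM | rfl, rfl⟩, hvU⟩
    · exact Or.inl (Or.inr ⟨hvI, hvU⟩)
    · exact Or.inr ⟨hvU, x, (hF3 x hxM.1).symm, hxM⟩
    · exact Or.inl (Or.inl ⟨hF3 x hw, hvU⟩)

end Flow

theorem required_qubits_eq_n_add_one_general {V : Type*} [Fintype V]
    (G : SimpleGraph V) (I O : Set V) (n m : ℕ)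
    (hI : I.ncard = n) (hO : O.ncard = n)
    (hm : Nat.card V = m)
    (f : V → V) (prec : V → V → Prop)
    (hmap : ∀ v, v ∉ O → f v ∉ I)
    (hirr : ∀ v, ¬ prec v v)
    (htrans : ∀ a b c, prec a b → prec b c → prec a c)
    (hF1 : ∀ i, i ∉ O → prec i (f i))
    (hF2 : ∀ i, i ∉ O → ∀ j, G.Adj (f i) j → j = i ∨ prec i j)
    (hF3 : ∀ i, i ∉ O → G.Adj i (f i))
    (lt : V → V → Prop)
    (hlt_trans : ∀ a b c, a ∉ O → b ∉ O → c ∉ O → lt a b → lt b c → lt a c)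
    (hlt_ext : ∀ u v, u ∉ O → v ∉ O → prec u v → lt u v)
    (w : V) (hw : w ∉ O) :
    (requiredSet G I O lt w ∪ {w}).ncard = n + 1 ∧ n + 1 = min (n + 1) m := by
  have hinj := injOn_compl_of_flow hirr htrans hF2 hF3
  have himg := Set.image_compl_eq_compl_of_injOn (hI.trans hO.symm) hmap hinj
  have hTO : measuredSet O lt w ∪ {w} ⊆ Oᶜ := by
    rintro v (hv | rfl)
    exacts [hv.1, hw]
  have hdisj : Disjoint I (f '' (measuredSet O lt w ∪ {w})) :=
    Set.disjoint_right.2 fun _ ⟨x, hx, hfx⟩ => hfx ▸ hmap x (hTO hx)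
  have hQ : (requiredSet G I O lt w).ncard = n := by
    rw [requiredSet_eq himg hF2 hF3 hlt_trans hlt_ext hw, ← hI]
    exact Set.ncard_union_image_diff hdisj (hinj.mono hTO)
      (measuredSet_union_singleton_subset himg hF1 hlt_trans hlt_ext hw)
  have hwQ : w ∉ requiredSet G I O lt w := by
    rintro ((⟨-, h⟩ | ⟨-, h⟩) | ⟨h, -⟩) <;> exact h (Or.inr rfl)
  have hcard : (requiredSet G I O lt w ∪ {w}).ncard = n + 1 := by
    rw [Set.union_singleton, Set.ncard_insert_of_notMem hwQ, hQ]
  have hle : (requiredSet G I O lt w ∪ {w}).ncard ≤ m := hm ▸ Set.ncard_le_card _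
  exact ⟨hcard, by omega⟩

/-- Theorem 1, combinatorial form: Let (f, ≺) be a flow on an open graph
(G, I, O) with |I| = |O| = n, I ≠ O, and |V| = m. Then for every measurement order <
and every w ∈ O^C, the set of qubits that must simultaneously exist when w is measured
satisfies |Q_w ∪ {w}| = n + 1 = min(n + 1, m). -/
theorem required_qubits_eq_n_add_one {V : Type*} [Fintype V]
    (G : SimpleGraph V) (I O : Set V) (n m : ℕ)
    (hI : I.ncard = n) (hO : O.ncard = n) (hIO : I ≠ O)
    (hm : Nat.card V = m)
    (f : V → V) (prec : V → V → Prop)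
    (hmap : ∀ v, v ∉ O → f v ∉ I)
    (hirr : ∀ v, ¬ prec v v)
    (htrans : ∀ a b c, prec a b → prec b c → prec a c)
    (hF1 : ∀ i, i ∉ O → prec i (f i))
    (hF2 : ∀ i, i ∉ O → ∀ j, G.Adj (f i) j → j = i ∨ prec i j)
    (hF3 : ∀ i, i ∉ O → G.Adj i (f i))
    (lt : V → V → Prop)
    (hlt_irr : ∀ v, v ∉ O → ¬ lt v v)
    (hlt_trans : ∀ a b c, a ∉ O → b ∉ O → c ∉ O → lt a b → lt b c → lt a c)
    (hlt_total : ∀ u v, u ∉ O → v ∉ O → u ≠ v → lt u v ∨ lt v u)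
    (hlt_ext : ∀ u v, u ∉ O → v ∉ O → prec u v → lt u v)
    (w : V) (hw : w ∉ O) :
    (requiredSet G I O lt w ∪ {w}).ncard = n + 1 ∧ n + 1 = min (n + 1) m :=
  required_qubits_eq_n_add_one_general G I O n m hI hO hm f prec hmap hirr htrans hF1 hF2 hF3 lt
    hlt_trans hlt_ext w hw
end
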